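/- Let n ≥ 4 and let Y_n be a minimizer of the quantization energy among subsets of Q with n points. Then for every y ∈ Y_n, the number of generators y' ∈ Y_n with y' ≠ y whose Voronoi cell intersects the Voronoi cell of y is at most N* := 2·(3Γ₄/Γ₅)³; in particular the Voronoi cell of y has at most N* faces. Here Γ₄ := (2·12^{1/4}·16^{1/3}/(π^{1/4}·ω₃^{1/12}))·(√(1 + 2⁴·3³/(5²·10³)) − 1)^{−1/2}·(5²·10³/(2²·3³))^{1/4}, Γ₅ := (1/4)·(√(1 + 2⁴·3³/(5²·10³)) − 1)·Γ₃, Γ₃ := ω₃^{−1/5}·Γ₁^{1/5}, Γ₁ := (2/5)^{2/3}/40. -/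

import Mathlib

/-!
Since `2 (3Γ₄/Γ₅)³ > 10¹⁵`, only `n > 10¹⁵` needs an argument; put `u = n^{-1/3}`.
Minimality is used through exchanges: removing a generator `y₀` raises the energy by at most
`(R + s)² |V_{y₀}|`, where `R` bounds all cell radii and `s` is the distance from `y₀` to the other
generators, while adding a point at distance `r` from all remaining generators lowers it by at least
`r⁵/1000`, because a cube of side `r/8` around that point gets much closer. For the smallest cell,
`|V_{y₀}| ≤ u³` forces `s ≤ 6u`, and the exchange gives `R ≤ 16u`; for an arbitrary cell, the other
`n - 1` generators leave a point `u/2` away from all of them, and the exchange gives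
`|V_y| ≥ u³/10⁹`. The cells meeting `V_y` lie in the cube of half-side `3R` about `y` and overlap
only in null sets, so there are at most `(96u)³ · 10⁹/u³ < 10¹⁵` of them.
-/

open MeasureTheory

noncomputable section

/-- Euclidean 3-space. -/
abbrev E3 := EuclideanSpace ℝ (Fin 3)

/-- The closed unit cube Q = [0,1]³. -/
def Qcube : Set E3 := {x | ∀ i, x i ∈ Set.Icc (0 : ℝ) 1}

/-- The quantization energy E(Y) = ∫_Q dist(x,Y)² dx. -/
def quantE (Y : Finset E3) : ℝ := ∫ x in Qcube, (Metric.infDist x (↑Y : Set E3)) ^ 2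

/-- The Voronoi cell of a generator y ∈ Y, relative to Q. -/
def vorCell (Y : Finset E3) (y : E3) : Set E3 :=
  {x ∈ Qcube | ∀ z ∈ Y, dist x y ≤ dist x z}

/-- Y is a minimizer of the quantization energy among n-point subsets of Q. -/
def IsMinimizer (n : ℕ) (Y : Finset E3) : Prop :=
  (↑Y : Set E3) ⊆ Qcube ∧ Y.card = n ∧
    ∀ Z : Finset E3, (↑Z : Set E3) ⊆ Qcube → Z.card = n → quantE Y ≤ quantE Z

/-- ω₃ = 4π/3, the volume of the unit ball in ℝ³. -/
def omega3 : ℝ := 4 * Real.pi / 3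

/-- Γ₁ = (2/5)^{2/3} / 40. -/
def Gamma1 : ℝ := ((2 / 5 : ℝ) ^ ((2 : ℝ) / 3)) / 40

/-- Γ₃ = ω₃^{-1/5} Γ₁^{1/5}. -/
def Gamma3 : ℝ := omega3 ^ (-(1 : ℝ) / 5) * Gamma1 ^ ((1 : ℝ) / 5)

/-- Γ₅ = (1/4)(√(1 + 2⁴·3³/(5²·10³)) − 1) Γ₃. -/
def Gamma5 : ℝ :=
  (1 / 4) * (Real.sqrt (1 + (2 ^ 4 * 3 ^ 3 : ℝ) / (5 ^ 2 * 10 ^ 3)) - 1) * Gamma3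

/-- Γ₄, the diameter upper-bound constant. -/
def Gamma4 : ℝ :=
  (2 * (12 : ℝ) ^ ((1 : ℝ) / 4) * (16 : ℝ) ^ ((1 : ℝ) / 3) /
      (Real.pi ^ ((1 : ℝ) / 4) * omega3 ^ ((1 : ℝ) / 12))) *
    (Real.sqrt (1 + (2 ^ 4 * 3 ^ 3 : ℝ) / (5 ^ 2 * 10 ^ 3)) - 1) ^ (-(1 : ℝ) / 2) *
    ((5 ^ 2 * 10 ^ 3 : ℝ) / (2 ^ 2 * 3 ^ 3)) ^ ((1 : ℝ) / 4)

open Metric Set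

section Cube

variable {ι : Type*}

def cube (c : EuclideanSpace ℝ ι) (s : ℝ) : Set (EuclideanSpace ℝ ι) := {x | ∀ i, |x i - c i| ≤ s}

lemma cube_eq_preimage (c : EuclideanSpace ℝ ι) (s : ℝ) :
    cube c s = (MeasurableEquiv.toLp 2 (ι → ℝ)).symm ⁻¹'
      univ.pi fun i => Icc (c i - s) (c i + s) := by
  ext x
  simp only [cube, mem_ofPred_eq, mem_preimage, mem_univ_pi, mem_Icc, abs_le]
  refine forall_congr' fun i => ?_
  change _ ↔ c i - s ≤ x i ∧ x i ≤ c i + s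
  constructor <;> rintro ⟨h₁, h₂⟩ <;> constructor <;> linarith

lemma isClosed_cube (c : EuclideanSpace ℝ ι) (s : ℝ) : IsClosed (cube c s) := by
  simp only [cube, ofPred_forall]
  exact isClosed_iInter fun i =>
    isClosed_le ((continuous_apply i).comp (PiLp.continuous_ofLp 2 _) |>.sub continuous_const).abs
      continuous_const

variable [Fintype ι]

lemma abs_apply_sub_apply_le_dist (x y : EuclideanSpace ℝ ι) (i : ι) : |x i - y i| ≤ dist x y :=
  (Real.dist_eq _ _).symm.trans_le (PiLp.dist_apply_le x y i)

lemma closedBall_subset_cube (c : EuclideanSpace ℝ ι) (s : ℝ) : closedBall c s ⊆ cube c s :=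
  fun x hx i => (abs_apply_sub_apply_le_dist x c i).trans hx

lemma dist_le_sqrt_card_mul_of_mem_cube {c x : EuclideanSpace ℝ ι} {s : ℝ} (hx : x ∈ cube c s) :
    dist x c ≤ √(Fintype.card ι) * s := by
  rcases isEmpty_or_nonempty ι with hι | ⟨⟨i₀⟩⟩
  · simp [EuclideanSpace.dist_eq]
  have hs : 0 ≤ s := (abs_nonneg _).trans (hx i₀)
  rw [EuclideanSpace.dist_eq, show √(Fintype.card ι) * s = √(Fintype.card ι * s ^ 2) by
    rw [Real.sqrt_mul (by positivity), Real.sqrt_sq hs]]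
  gcongr
  calc ∑ i, dist (x i) (c i) ^ 2 ≤ ∑ _i : ι, s ^ 2 := by
        gcongr with i
        rw [Real.dist_eq]
        exact hx i
    _ = Fintype.card ι * s ^ 2 := by simp

lemma measurableSet_cube (c : EuclideanSpace ℝ ι) (s : ℝ) : MeasurableSet (cube c s) :=
  (isClosed_cube c s).measurableSet

lemma volume_cube (c : EuclideanSpace ℝ ι) {s : ℝ} (hs : 0 ≤ s) :
    volume (cube c s) = ENNReal.ofReal ((2 * s) ^ Fintype.card ι) := by
  rw [cube_eq_preimage,
    (EuclideanSpace.volume_preserving_symm_measurableEquiv_toLp ι).measure_preimage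
      (MeasurableSet.univ_pi fun _ => measurableSet_Icc).nullMeasurableSet, volume_pi_pi]
  simp only [Real.volume_Icc, add_sub_sub_cancel, ← two_mul, Finset.prod_const, Finset.card_univ]
  rw [ENNReal.ofReal_pow (by positivity)]

lemma volume_real_cube (c : EuclideanSpace ℝ ι) {s : ℝ} (hs : 0 ≤ s) :
    volume.real (cube c s) = (2 * s) ^ Fintype.card ι := by
  rw [measureReal_def, volume_cube c hs, ENNReal.toReal_ofReal (by positivity)]

end Cube

lemma sqrt_three_lt_two : √3 < 2 := by
  rw [Real.sqrt_lt' two_pos]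
  norm_num

lemma Qcube_eq_cube : Qcube = cube (WithLp.toLp 2 fun _ => 1 / 2) (1 / 2) := by
  ext x
  simp only [Qcube, cube, mem_ofPred_eq, mem_Icc, abs_le]
  refine forall_congr' fun i => ?_
  constructor <;> rintro ⟨h₁, h₂⟩ <;> constructor <;> linarith

lemma volume_Qcube : volume Qcube = 1 := by
  rw [Qcube_eq_cube, volume_cube _ (by norm_num)]
  norm_num

lemma dist_le_two_mul_of_mem_cube {c x : E3} {s : ℝ} (hx : x ∈ cube c s) : dist x c ≤ 2 * s := by
  have hs : 0 ≤ s := (abs_nonneg _).trans (hx 0)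
  have := dist_le_sqrt_card_mul_of_mem_cube hx
  rw [Fintype.card_fin, Nat.cast_ofNat] at this
  nlinarith [sqrt_three_lt_two]

lemma dist_le_two_of_mem_Qcube {x y : E3} (hx : x ∈ Qcube) (hy : y ∈ Qcube) : dist x y ≤ 2 := by
  rw [Qcube_eq_cube] at hx hy
  linarith [dist_triangle_right x y (WithLp.toLp 2 fun _ => 1 / 2), dist_le_two_mul_of_mem_cube hx,
    dist_le_two_mul_of_mem_cube hy]

lemma isCompact_Qcube : IsCompact Qcube :=
  isCompact_of_isClosed_isBounded (Qcube_eq_cube ▸ isClosed_cube _ _)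
    (isBounded_iff.2 ⟨2, fun _ hx _ hy => dist_le_two_of_mem_Qcube hx hy⟩)

lemma exists_cube_subset_Qcube {w : E3} (hw : w ∈ Qcube) {s : ℝ} (hs : 0 ≤ s) (hs' : s ≤ 1 / 2) :
    ∃ c, w ∈ cube c s ∧ cube c s ⊆ Qcube := by
  refine ⟨WithLp.toLp 2 fun i => min (w i + s) (1 - s), fun i => ?_, fun x hx i => ?_⟩
  · obtain ⟨h₀, h₁⟩ := hw i
    show |w i - min (w i + s) (1 - s)| ≤ s
    rw [abs_le]
    constructor <;> cases min_cases (w i + s) (1 - s) <;> linarith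
  · obtain ⟨h₀, h₁⟩ := hw i
    have hxi : |x i - min (w i + s) (1 - s)| ≤ s := hx i
    rw [abs_le] at hxi
    constructor <;> cases min_cases (w i + s) (1 - s) <;> linarith

lemma vorCell_subset_Qcube (Y : Finset E3) (y : E3) : vorCell Y y ⊆ Qcube := fun _ hx => hx.1

lemma self_mem_vorCell (Y : Finset E3) {y : E3} (hy : y ∈ Qcube) : y ∈ vorCell Y y :=
  ⟨hy, fun z _ => by simp⟩

lemma exists_mem_vorCell {Y : Finset E3} (hY : Y.Nonempty) {x : E3} (hx : x ∈ Qcube) :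
    ∃ y ∈ Y, x ∈ vorCell Y y := by
  obtain ⟨y, hy, hmin⟩ := Y.exists_min_image (dist x) hY
  exact ⟨y, hy, hx, hmin⟩

lemma isClosed_vorCell (Y : Finset E3) (y : E3) : IsClosed (vorCell Y y) := by
  have : vorCell Y y = Qcube ∩ ⋂ z ∈ Y, {x | dist x y ≤ dist x z} := by
    ext x
    simp [vorCell]
  rw [this]
  exact isCompact_Qcube.isClosed.inter <| isClosed_biInter fun z _ =>
    isClosed_le (continuous_id.dist continuous_const) (continuous_id.dist continuous_const)

lemma measurableSet_vorCell (Y : Finset E3) (y : E3) : MeasurableSet (vorCell Y y) :=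
  (isClosed_vorCell Y y).measurableSet

lemma volume_vorCell_ne_top (Y : Finset E3) (y : E3) : volume (vorCell Y y) ≠ ⊤ :=
  ((measure_mono (vorCell_subset_Qcube Y y)).trans_lt (by simp [volume_Qcube])).ne

lemma volume_vorCell_inter_vorCell {Y : Finset E3} {y y' : E3} (hy : y ∈ Y) (hy' : y' ∈ Y)
    (hne : y ≠ y') : volume (vorCell Y y ∩ vorCell Y y') = 0 := by
  refine measure_mono_null (t := AffineSubspace.perpBisector y y') ?_
    (Measure.addHaar_affineSubspace _ _ fun h => hne ?_)
  · rintro x ⟨hx, hx'⟩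
    rw [SetLike.mem_coe, AffineSubspace.mem_perpBisector_iff_dist_eq]
    exact le_antisymm (hx.2 y' hy') (hx'.2 y hy)
  · have := h ▸ AffineSubspace.mem_top ℝ E3 y
    rwa [AffineSubspace.mem_perpBisector_iff_dist_eq, dist_self, eq_comm, dist_eq_zero] at this

lemma sum_volume_real_vorCell {Y : Finset E3} (hY : Y.Nonempty) :
    ∑ y ∈ Y, volume.real (vorCell Y y) = 1 := by
  have hcover : ⋃ y ∈ Y, vorCell Y y = Qcube :=
    (iUnion₂_subset fun y _ => vorCell_subset_Qcube Y y).antisymm fun x hx =>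
      let ⟨y, hy, hxy⟩ := exists_mem_vorCell hY hx
      mem_biUnion hy hxy
  rw [← measureReal_biUnion_finset₀ ?_ (fun y _ => (measurableSet_vorCell Y y).nullMeasurableSet)
    (fun y _ => volume_vorCell_ne_top Y y), hcover, measureReal_def, volume_Qcube,
    ENNReal.toReal_one]
  exact fun y hy y' hy' hne => volume_vorCell_inter_vorCell hy hy' hne

lemma card_mul_le_volume_real_of_vorCell_subset {Y T : Finset E3} (hTY : T ⊆ Y) {W : Set E3}
    (hW : volume W ≠ ⊤) (hsub : ∀ y ∈ T, vorCell Y y ⊆ W) {m : ℝ}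
    (hm : ∀ y ∈ T, m ≤ volume.real (vorCell Y y)) : T.card * m ≤ volume.real W :=
  calc T.card * m ≤ ∑ y ∈ T, volume.real (vorCell Y y) := by
        simpa using Finset.card_nsmul_le_sum T _ m hm
    _ = volume.real (⋃ y ∈ T, vorCell Y y) :=
        (measureReal_biUnion_finset₀
          (fun y hy y' hy' hne => volume_vorCell_inter_vorCell (hTY hy) (hTY hy') hne)
          (fun y _ => (measurableSet_vorCell Y y).nullMeasurableSet)
          (fun y _ => volume_vorCell_ne_top Y y)).symm
    _ ≤ volume.real W := measureReal_mono (iUnion₂_subset hsub) hW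

lemma vorCell_subset_cube_of_inter_nonempty {Y : Finset E3} {y y' : E3} (hy' : y' ∈ Y)
    (hinter : (vorCell Y y' ∩ vorCell Y y).Nonempty) {R : ℝ}
    (hR : ∀ x ∈ vorCell Y y', dist x y' ≤ R) : vorCell Y y' ⊆ cube y (3 * R) := by
  obtain ⟨x, hx', hx⟩ := hinter
  refine fun z hz => closedBall_subset_cube y _ (mem_closedBall.2 ?_)
  have hxy : dist x y ≤ dist x y' := hx.2 y' hy'
  linarith [dist_triangle4 z y' x y, dist_comm y' x, hR z hz, hR x hx']

lemma integrableOn_infDist_sq (Z : Finset E3) :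
    IntegrableOn (fun x => infDist x (Z : Set E3) ^ 2) Qcube :=
  ((continuous_infDist_pt _).pow 2).continuousOn.integrableOn_compact isCompact_Qcube

lemma quantE_le_add_of_le_add_indicator {Z Z' : Finset E3} {X : Set E3} (hX : MeasurableSet X)
    (hXQ : X ⊆ Qcube) (C : ℝ)
    (h : ∀ x ∈ Qcube,
      infDist x (Z' : Set E3) ^ 2 ≤ infDist x (Z : Set E3) ^ 2 + X.indicator (fun _ => C) x) :
    quantE Z' ≤ quantE Z + C * volume.real X := by
  have hind : IntegrableOn (X.indicator fun _ => C) Qcube :=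
    (integrableOn_const (by simp [volume_Qcube])).indicator hX
  calc quantE Z' ≤ ∫ x in Qcube, (infDist x (Z : Set E3) ^ 2 + X.indicator (fun _ => C) x) :=
        setIntegral_mono_on (integrableOn_infDist_sq Z') ((integrableOn_infDist_sq Z).add hind)
          isCompact_Qcube.isClosed.measurableSet h
    _ = quantE Z + C * volume.real X := by
        rw [integral_add (integrableOn_infDist_sq Z) hind, setIntegral_indicator hX,
          inter_eq_self_of_subset_right hXQ, setIntegral_const, smul_eq_mul, mul_comm]
        rfl

open scoped Classical in
lemma quantE_erase_le {Y : Finset E3} {y₀ : E3} (hy₀ : y₀ ∈ Y) {C : ℝ}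
    (hC : ∀ x ∈ vorCell Y y₀, infDist x (Y.erase y₀ : Set E3) ^ 2 ≤ C) :
    quantE (Y.erase y₀) ≤ quantE Y + C * volume.real (vorCell Y y₀) := by
  refine quantE_le_add_of_le_add_indicator (measurableSet_vorCell Y y₀)
    (vorCell_subset_Qcube Y y₀) C fun x hx => ?_
  by_cases hxV : x ∈ vorCell Y y₀
  · rw [indicator_of_mem hxV]
    linarith [hC x hxV, sq_nonneg (infDist x (Y : Set E3))]
  · rw [indicator_of_notMem hxV, add_zero]
    obtain ⟨z, hz, hxz⟩ := Y.finite_toSet.isCompact.exists_infDist_eq_dist ⟨y₀, hy₀⟩ x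
    have hzy₀ : z ≠ y₀ := by
      rintro rfl
      exact hxV ⟨hx, fun w hw => hxz ▸ infDist_le_dist_of_mem hw⟩
    refine pow_le_pow_left₀ infDist_nonneg ?_ 2
    rw [hxz]
    exact infDist_le_dist_of_mem (by simp [hzy₀, hz])

open scoped Classical in
lemma quantE_insert_le {Z : Finset E3} (hZ : Z.Nonempty) {X : Set E3} (hX : MeasurableSet X)
    (hXQ : X ⊆ Qcube) {p : E3} {a b : ℝ} (ha : 0 ≤ a)
    (hfar : ∀ x ∈ X, a ≤ infDist x (Z : Set E3)) (hnear : ∀ x ∈ X, dist x p ≤ b) :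
    quantE (insert p Z) ≤ quantE Z - (a ^ 2 - b ^ 2) * volume.real X := by
  rw [sub_eq_add_neg, ← neg_mul]
  refine quantE_le_add_of_le_add_indicator hX hXQ _ fun x _ => ?_
  rw [Finset.coe_insert]
  have hmono : infDist x (insert p (Z : Set E3)) ≤ infDist x (Z : Set E3) :=
    infDist_le_infDist_of_subset (by simp [subset_insert]) (by simpa using hZ)
  by_cases hxX : x ∈ X
  · rw [indicator_of_mem hxX]
    have hp : infDist x (insert p (Z : Set E3)) ≤ b :=
      (infDist_le_dist_of_mem (by simp)).trans (hnear x hxX)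
    have ha' : a ^ 2 ≤ infDist x (Z : Set E3) ^ 2 := pow_le_pow_left₀ ha (hfar x hxX) 2
    nlinarith [infDist_nonneg (x := x) (s := insert p (Z : Set E3))]
  · rw [indicator_of_notMem hxX, add_zero]
    exact pow_le_pow_left₀ infDist_nonneg hmono 2

open scoped Classical in
lemma exists_quantE_insert_le {Z : Finset E3} (hZQ : (Z : Set E3) ⊆ Qcube) (hZ : Z.Nonempty)
    {w : E3} (hw : w ∈ Qcube) {r : ℝ} (hr : 0 < r) (hfar : ∀ z ∈ Z, r ≤ dist w z) :
    ∃ p ∈ Qcube, p ∉ Z ∧ quantE (insert p Z) ≤ quantE Z - r ^ 5 / 1000 := by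
  have hr2 : r ≤ 2 := by
    obtain ⟨z, hz⟩ := hZ
    linarith [hfar z hz, dist_le_two_of_mem_Qcube hw (hZQ hz)]
  obtain ⟨c, hwc, hcQ⟩ := exists_cube_subset_Qcube hw (s := r / 16) (by positivity) (by linarith)
  have hwZ : r ≤ infDist w (Z : Set E3) := (le_infDist (by simpa using hZ)).2 hfar
  have hfar' : ∀ x ∈ cube c (r / 16), 3 * r / 4 ≤ infDist x (Z : Set E3) := fun x hx => by
    linarith [infDist_le_infDist_add_dist (x := w) (y := x) (s := (Z : Set E3)),
      dist_triangle_right w x c, dist_le_two_mul_of_mem_cube hwc, dist_le_two_mul_of_mem_cube hx]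
  have hnear : ∀ x ∈ cube c (r / 16), dist x c ≤ r / 8 := fun x hx => by
    linarith [dist_le_two_mul_of_mem_cube hx]
  have hcc : c ∈ cube c (r / 16) := fun i => by simp; positivity
  refine ⟨c, hcQ hcc, fun hcZ => ?_, ?_⟩
  · have := hfar' c hcc
    rw [infDist_zero_of_mem (by simpa using hcZ)] at this
    linarith
  · have := quantE_insert_le hZ (measurableSet_cube c _) hcQ (by positivity) hfar' hnear
    rw [volume_real_cube c (by positivity), Fintype.card_fin] at this
    nlinarith [pow_pos hr 5]

lemma exists_mem_Qcube_forall_le_dist (W : Finset E3) {ρ : ℝ} (hW : W.card * (2 * ρ) ^ 3 < 1) :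
    ∃ w ∈ Qcube, ∀ z ∈ W, ρ ≤ dist w z := by
  by_contra! hnear
  have hρ : 0 < ρ := by
    obtain ⟨z, -, hz⟩ := hnear 0 fun i => by simp
    exact dist_nonneg.trans_lt hz
  have hcover : Qcube ⊆ ⋃ z ∈ W, cube z ρ := fun w hw =>
    let ⟨z, hz, hwz⟩ := hnear w hw
    mem_biUnion hz (closedBall_subset_cube z ρ (mem_closedBall.2 hwz.le))
  have := (measure_mono (μ := volume) hcover).trans (measure_biUnion_finset_le W _)
  simp only [volume_Qcube, volume_cube _ hρ.le, Fintype.card_fin, Finset.sum_const,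
    nsmul_eq_mul] at this
  rw [← ENNReal.ofReal_natCast, ← ENNReal.ofReal_mul (by positivity), ENNReal.one_le_ofReal] at this
  linarith

open scoped Classical in
lemma infDist_erase_le_of_volume_real_lt {Y : Finset E3} {y₀ : E3} (hy₀ : y₀ ∈ Qcube) {s : ℝ}
    (hs : 0 ≤ s) (hs' : s ≤ 1 / 2) (hvol : volume.real (vorCell Y y₀) < (2 * s) ^ 3) :
    infDist y₀ (Y.erase y₀ : Set E3) ≤ 8 * s := by
  obtain ⟨c, hy₀c, hcQ⟩ := exists_cube_subset_Qcube hy₀ hs hs'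
  obtain ⟨x, hxc, hxV⟩ := not_subset.1 fun hsub : cube c s ⊆ vorCell Y y₀ => by
    have := measureReal_mono hsub (volume_vorCell_ne_top Y y₀)
    rw [volume_real_cube c hs, Fintype.card_fin] at this
    linarith
  obtain ⟨z, hzY, hzx⟩ : ∃ z ∈ Y, dist x z < dist x y₀ := by
    by_contra! h
    exact hxV ⟨hcQ hxc, h⟩
  have hzy₀ : z ≠ y₀ := by
    rintro rfl
    exact lt_irrefl _ hzx
  calc infDist y₀ (Y.erase y₀ : Set E3) ≤ dist y₀ z := infDist_le_dist_of_mem (by simp [hzy₀, hzY])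
    _ ≤ dist y₀ x + dist x z := dist_triangle _ _ _
    _ ≤ 8 * s := by
        linarith [dist_comm y₀ x, dist_triangle_right y₀ x c, dist_le_two_mul_of_mem_cube hy₀c,
          dist_le_two_mul_of_mem_cube hxc]

open scoped Classical in
lemma IsMinimizer.pow_five_div_le {n : ℕ} {Y : Finset E3} (hY : IsMinimizer n Y) (hn : 2 ≤ n)
    {y₀ : E3} (hy₀ : y₀ ∈ Y) {R s : ℝ} (hR : ∀ x ∈ vorCell Y y₀, dist x y₀ ≤ R)
    (hs : infDist y₀ (Y.erase y₀ : Set E3) ≤ s) {w : E3} (hw : w ∈ Qcube) {r : ℝ} (hr : 0 < r)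
    (hfar : ∀ z ∈ Y.erase y₀, r ≤ dist w z) :
    r ^ 5 / 1000 ≤ (R + s) ^ 2 * volume.real (vorCell Y y₀) := by
  obtain ⟨hYQ, hcard, hmin⟩ := hY
  have hcard' : (Y.erase y₀).card = n - 1 := by rw [Finset.card_erase_of_mem hy₀, hcard]
  have hne : (Y.erase y₀).Nonempty := by
    rw [← Finset.card_pos, hcard']
    omega
  have hEQ : (Y.erase y₀ : Set E3) ⊆ Qcube := (Finset.coe_subset.2 (Y.erase_subset y₀)).trans hYQ
  obtain ⟨p, hpQ, hpE, hgain⟩ := exists_quantE_insert_le hEQ hne hw hr hfar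
  have hcost := quantE_erase_le hy₀ (C := (R + s) ^ 2) fun x hx =>
    pow_le_pow_left₀ infDist_nonneg
      (by linarith [infDist_le_infDist_add_dist (x := x) (y := y₀) (s := (Y.erase y₀ : Set E3)),
        hR x hx]) 2
  have := hmin (insert p (Y.erase y₀)) (by simpa using insert_subset hpQ hEQ)
    (by rw [Finset.card_insert_of_notMem hpE, hcard']; omega)
  linarith

def cellRadius (Y : Finset E3) : ℝ := sSup {d | ∃ y ∈ Y, ∃ x ∈ vorCell Y y, dist x y = d}

lemma bddAbove_cellRadius {Y : Finset E3} (hYQ : (Y : Set E3) ⊆ Qcube) :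
    BddAbove {d | ∃ y ∈ Y, ∃ x ∈ vorCell Y y, dist x y = d} :=
  ⟨2, by
    rintro _ ⟨y, hy, x, hx, rfl⟩
    exact dist_le_two_of_mem_Qcube hx.1 (hYQ hy)⟩

lemma dist_le_cellRadius {Y : Finset E3} (hYQ : (Y : Set E3) ⊆ Qcube) {y x : E3} (hy : y ∈ Y)
    (hx : x ∈ vorCell Y y) : dist x y ≤ cellRadius Y :=
  le_csSup (bddAbove_cellRadius hYQ) ⟨y, hy, x, hx, rfl⟩

lemma exists_lt_dist_of_lt_cellRadius {Y : Finset E3} (hYQ : (Y : Set E3) ⊆ Qcube)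
    (hY : Y.Nonempty) {b : ℝ} (hb : b < cellRadius Y) :
    ∃ y ∈ Y, ∃ x ∈ vorCell Y y, b < dist x y := by
  obtain ⟨y, hy⟩ := hY
  obtain ⟨_, ⟨y, hy, x, hx, rfl⟩, hlt⟩ :=
    exists_lt_of_lt_csSup (s := {d | ∃ y ∈ Y, ∃ x ∈ vorCell Y y, dist x y = d})
      ⟨0, y, hy, y, self_mem_vorCell Y (hYQ hy), dist_self y⟩ hb
  exact ⟨y, hy, x, hx, hlt⟩

lemma two_le_of_mul_pow_three_eq_one {n : ℕ} {u : ℝ} (hu : 0 < u) (hu1 : u ≤ 1 / 3)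
    (hnu : n * u ^ 3 = 1) : 2 ≤ n := by
  have : u ^ 3 ≤ (1 / 3) ^ 3 := pow_le_pow_left₀ hu.le hu1 3
  exact_mod_cast (show (2 : ℝ) ≤ n by nlinarith [pow_pos hu 3])

lemma IsMinimizer.cellRadius_le {n : ℕ} {Y : Finset E3} (hY : IsMinimizer n Y) {u : ℝ}
    (hu : 0 < u) (hu1 : u ≤ 1 / 3) (hnu : n * u ^ 3 = 1) : cellRadius Y ≤ 16 * u := by
  have hn := two_le_of_mul_pow_three_eq_one hu hu1 hnu
  have hYne : Y.Nonempty := by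
    rw [← Finset.card_pos, hY.2.1]
    omega
  obtain ⟨y₀, hy₀, hv₀⟩ : ∃ y₀ ∈ Y, volume.real (vorCell Y y₀) ≤ u ^ 3 :=
    Finset.exists_le_of_sum_le hYne (by
      rw [sum_volume_real_vorCell hYne, Finset.sum_const, hY.2.1, nsmul_eq_mul, hnu])
  have hs := infDist_erase_le_of_volume_real_lt (Y := Y) (hY.1 hy₀) (s := 3 * u / 4)
    (by positivity) (by linarith) (by nlinarith [pow_pos hu 3])
  set R := cellRadius Y
  by_contra! hR
  have hRpos : 0 < R := by linarith
  obtain ⟨y, hy, x, hx, hxy⟩ := exists_lt_dist_of_lt_cellRadius hY.1 hYne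
    (show 9 / 10 * R < R by linarith)
  have hgain := hY.pow_five_div_le hn hy₀ (fun x hx => dist_le_cellRadius hY.1 hy₀ hx) hs
    (vorCell_subset_Qcube Y y hx) (by linarith) fun z hz => hx.2 z (Finset.mem_of_mem_erase hz)
  have h₁ : (9 / 10 * R) ^ 5 < dist x y ^ 5 := pow_lt_pow_left₀ hxy (by positivity) (by norm_num)
  have h₂ : (R + 8 * (3 * u / 4)) ^ 2 * volume.real (vorCell Y y₀) ≤
      (11 / 8 * R) ^ 2 * (R / 16) ^ 3 :=
    mul_le_mul (pow_le_pow_left₀ (by positivity) (by linarith) 2)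
      (hv₀.trans (pow_le_pow_left₀ hu.le (by linarith) 3)) measureReal_nonneg (by positivity)
  nlinarith [pow_pos hRpos 5]

lemma IsMinimizer.pow_three_div_le_volume_real_vorCell {n : ℕ} {Y : Finset E3}
    (hY : IsMinimizer n Y) {u : ℝ} (hu : 0 < u) (hu1 : u ≤ 1 / 3) (hnu : n * u ^ 3 = 1) {y : E3}
    (hy : y ∈ Y) : u ^ 3 / 10 ^ 9 ≤ volume.real (vorCell Y y) := by
  classical
  have hn := two_le_of_mul_pow_three_eq_one hu hu1 hnu
  by_contra! hv
  have hs := infDist_erase_le_of_volume_real_lt (Y := Y) (hY.1 hy) (s := u / 2000)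
    (by positivity) (by linarith) (by linarith)
  have hcard : ((Y.erase y).card : ℝ) + 1 = n := by
    rw [← hY.2.1]
    exact_mod_cast Finset.card_erase_add_one hy
  obtain ⟨w, hw, hfar⟩ := exists_mem_Qcube_forall_le_dist (Y.erase y) (ρ := u / 2)
    (by nlinarith [pow_pos hu 3])
  have hgain := hY.pow_five_div_le hn hy
    (fun x hx => (dist_le_cellRadius hY.1 hy hx).trans (hY.cellRadius_le hu hu1 hnu)) hs hw
    (by positivity) hfar
  nlinarith [pow_pos hu 5, sq_nonneg (16 * u + 8 * (u / 2000))]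

lemma le_rpow_one_div {x y : ℝ} {k : ℕ} (hx : 0 ≤ x) (hk : k ≠ 0) (h : x ^ k ≤ y) :
    x ≤ y ^ ((1 : ℝ) / k) := by
  rw [one_div, Real.le_rpow_inv_iff_of_pos hx ((pow_nonneg hx k).trans h) (by positivity),
    Real.rpow_natCast]
  exact h

lemma rpow_one_div_le {x y : ℝ} {k : ℕ} (hx : 0 ≤ x) (hy : 0 ≤ y) (hk : k ≠ 0) (h : x ≤ y ^ k) :
    x ^ ((1 : ℝ) / k) ≤ y := by
  rw [one_div, Real.rpow_inv_le_iff_of_pos hx hy (by positivity), Real.rpow_natCast]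
  exact h

lemma sqrt_sub_one_pos_and_le :
    0 < √(1 + (2 ^ 4 * 3 ^ 3 : ℝ) / (5 ^ 2 * 10 ^ 3)) - 1 ∧
      √(1 + (2 ^ 4 * 3 ^ 3 : ℝ) / (5 ^ 2 * 10 ^ 3)) - 1 ≤ 1 / 100 := by
  constructor
  · rw [sub_pos, Real.lt_sqrt zero_le_one]
    norm_num
  · rw [sub_le_iff_le_add, Real.sqrt_le_left (by norm_num)]
    norm_num

lemma omega3_bounds : 1 ≤ omega3 ∧ omega3 ≤ 8 := by
  unfold omega3
  constructor <;> linarith [Real.pi_gt_three, Real.pi_lt_four]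

lemma thirty_five_le_Gamma4 : 35 ≤ Gamma4 := by
  obtain ⟨hδ, hδ'⟩ := sqrt_sub_one_pos_and_le
  obtain ⟨hω, hω'⟩ := omega3_bounds
  set δ := √(1 + (2 ^ 4 * 3 ^ 3 : ℝ) / (5 ^ 2 * 10 ^ 3)) - 1
  have hA : 1 ≤ 2 * (12 : ℝ) ^ ((1 : ℝ) / 4) * (16 : ℝ) ^ ((1 : ℝ) / 3) /
      (Real.pi ^ ((1 : ℝ) / 4) * omega3 ^ ((1 : ℝ) / 12)) := by
    have h₁ : Real.pi ^ ((1 : ℝ) / 4) ≤ 3 / 2 :=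
      rpow_one_div_le Real.pi_pos.le (by norm_num) (k := 4) (by norm_num)
        (by linarith [Real.pi_lt_four])
    have h₂ : omega3 ^ ((1 : ℝ) / 12) ≤ 6 / 5 :=
      rpow_one_div_le (by linarith) (by norm_num) (k := 12) (by norm_num) (by linarith)
    have h₃ : 1 ≤ (12 : ℝ) ^ ((1 : ℝ) / 4) := Real.one_le_rpow (by norm_num) (by norm_num)
    have h₄ : 1 ≤ (16 : ℝ) ^ ((1 : ℝ) / 3) := Real.one_le_rpow (by norm_num) (by norm_num)
    rw [le_div_iff₀ (by positivity)]
    nlinarith [Real.rpow_nonneg Real.pi_pos.le ((1 : ℝ) / 4),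
      Real.rpow_nonneg (zero_le_one.trans hω) ((1 : ℝ) / 12)]
  have hB : 10 ≤ δ ^ (-(1 : ℝ) / 2) := by
    rw [neg_div, Real.rpow_neg hδ.le, ← Real.sqrt_eq_rpow,
      le_inv_comm₀ (by norm_num) (by positivity), Real.sqrt_le_left (by norm_num)]
    linarith
  have hC : 7 / 2 ≤ ((5 ^ 2 * 10 ^ 3 : ℝ) / (2 ^ 2 * 3 ^ 3)) ^ ((1 : ℝ) / 4) :=
    le_rpow_one_div (by norm_num) (k := 4) (by norm_num) (by norm_num)
  unfold Gamma4
  calc (35 : ℝ) = 1 * 10 * (7 / 2) := by norm_num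
    _ ≤ _ := by gcongr

lemma Gamma3_pos_and_le : 0 < Gamma3 ∧ Gamma3 ≤ 1 / 2 := by
  obtain ⟨hω, -⟩ := omega3_bounds
  have hΓ₁ : 0 < Gamma1 := by unfold Gamma1; positivity
  have hΓ₁' : Gamma1 ≤ 1 / 32 := by
    unfold Gamma1
    linarith [Real.rpow_le_one (x := 2 / 5) (by norm_num) (by norm_num) (z := 2 / 3) (by norm_num)]
  unfold Gamma3
  refine ⟨by positivity, ?_⟩
  calc omega3 ^ (-(1 : ℝ) / 5) * Gamma1 ^ ((1 : ℝ) / 5) ≤ 1 * (1 / 2) := by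
        gcongr
        · exact Real.rpow_le_one_of_one_le_of_nonpos hω (by norm_num)
        · exact rpow_one_div_le hΓ₁.le (by norm_num) (k := 5) (by norm_num) (by linarith)
    _ = 1 / 2 := by norm_num

lemma Gamma5_pos_and_le : 0 < Gamma5 ∧ Gamma5 ≤ 1 / 800 := by
  obtain ⟨hδ, hδ'⟩ := sqrt_sub_one_pos_and_le
  obtain ⟨hΓ₃, hΓ₃'⟩ := Gamma3_pos_and_le
  unfold Gamma5
  refine ⟨by positivity, ?_⟩
  calc 1 / 4 * (√(1 + (2 ^ 4 * 3 ^ 3 : ℝ) / (5 ^ 2 * 10 ^ 3)) - 1) * Gamma3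
        ≤ 1 / 4 * (1 / 100) * (1 / 2) := by gcongr
    _ = 1 / 800 := by norm_num

lemma ten_pow_fifteen_le : (10 : ℝ) ^ 15 ≤ 2 * (3 * Gamma4 / Gamma5) ^ 3 := by
  obtain ⟨hΓ₅, hΓ₅'⟩ := Gamma5_pos_and_le
  have : 84000 ≤ 3 * Gamma4 / Gamma5 := by
    rw [le_div_iff₀ hΓ₅]
    nlinarith [thirty_five_le_Gamma4]
  nlinarith [pow_le_pow_left₀ (by norm_num) this 3]

lemma exists_pos_le_one_third_mul_pow_three_eq_one {n : ℕ} (hn : 27 ≤ n) :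
    ∃ u : ℝ, 0 < u ∧ u ≤ 1 / 3 ∧ n * u ^ 3 = 1 := by
  have hn₀ : (0 : ℝ) < n := by exact_mod_cast (by omega : 0 < n)
  have hu3 : ((n : ℝ)⁻¹ ^ (3 : ℝ)⁻¹) ^ 3 = (n : ℝ)⁻¹ :=
    Real.rpow_inv_natCast_pow (n := 3) (by positivity) (by norm_num)
  refine ⟨(n : ℝ)⁻¹ ^ (3 : ℝ)⁻¹, by positivity, ?_, by rw [hu3, mul_inv_cancel₀ hn₀.ne']⟩
  refine (pow_le_pow_iff_left₀ (by positivity) (by norm_num) three_ne_zero).1 ?_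
  rw [hu3, inv_le_comm₀ hn₀ (by norm_num)]
  norm_num
  exact hn

open scoped Classical in
lemma IsMinimizer.card_filter_vorCell_inter_nonempty_le {n : ℕ} {Y : Finset E3}
    (hY : IsMinimizer n Y) (y : E3) :
    (Y.filter fun y' => (vorCell Y y' ∩ vorCell Y y).Nonempty).card ≤ 10 ^ 15 := by
  set T := Y.filter fun y' => (vorCell Y y' ∩ vorCell Y y).Nonempty
  have hTY : T ⊆ Y := Finset.filter_subset _ Y
  rcases le_or_gt n (10 ^ 15) with hn | hn
  · exact (Finset.card_le_card hTY).trans (hY.2.1.trans_le hn)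
  obtain ⟨u, hu, hu1, hnu⟩ := exists_pos_le_one_third_mul_pow_three_eq_one (n := n) (by omega)
  have hsub : ∀ y' ∈ T, vorCell Y y' ⊆ cube y (3 * (16 * u)) := fun y' hy' =>
    vorCell_subset_cube_of_inter_nonempty (hTY hy') (Finset.mem_filter.1 hy').2 fun x hx =>
      (dist_le_cellRadius hY.1 (hTY hy') hx).trans (hY.cellRadius_le hu hu1 hnu)
  have hcount := card_mul_le_volume_real_of_vorCell_subset hTY
    (by simp [volume_cube y (s := 3 * (16 * u)) (by positivity)]) hsub
    fun y' hy' => hY.pow_three_div_le_volume_real_vorCell hu hu1 hnu (hTY hy')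
  rw [volume_real_cube y (by positivity), Fintype.card_fin] at hcount
  have : (T.card : ℝ) * u ^ 3 ≤ 96 ^ 3 * 10 ^ 9 * u ^ 3 := by linarith
  have hT : (T.card : ℝ) ≤ 10 ^ 15 :=
    (le_of_mul_le_mul_right this (pow_pos hu 3)).trans (by norm_num)
  exact_mod_cast hT

theorem stmt_6_general (n : ℕ) (Y : Finset E3) (hY : IsMinimizer n Y) (y : E3) :
    ({y' : E3 | y' ∈ Y ∧ y' ≠ y ∧ (vorCell Y y' ∩ vorCell Y y).Nonempty}.ncard : ℝ) ≤
      2 * (3 * Gamma4 / Gamma5) ^ 3 := by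
  classical
  set T := Y.filter fun y' => (vorCell Y y' ∩ vorCell Y y).Nonempty
  have hsub : {y' : E3 | y' ∈ Y ∧ y' ≠ y ∧ (vorCell Y y' ∩ vorCell Y y).Nonempty} ⊆ T :=
    fun y' hy' => by simp [T, hy'.1, hy'.2.2]
  calc ({y' : E3 | y' ∈ Y ∧ y' ≠ y ∧ (vorCell Y y' ∩ vorCell Y y).Nonempty}.ncard : ℝ)
      ≤ T.card := by
        exact_mod_cast (Set.ncard_le_ncard hsub T.finite_toSet).trans_eq (Set.ncard_coe_finset T)
    _ ≤ 10 ^ 15 := by exact_mod_cast hY.card_filter_vorCell_inter_nonempty_le y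
    _ ≤ 2 * (3 * Gamma4 / Gamma5) ^ 3 := ten_pow_fifteen_le

theorem stmt_6 (n : ℕ) (hn : 4 ≤ n) (Y : Finset E3) (hY : IsMinimizer n Y)
    (y : E3) (hyY : y ∈ Y) :
    ({y' : E3 | y' ∈ Y ∧ y' ≠ y ∧ (vorCell Y y' ∩ vorCell Y y).Nonempty}.ncard : ℝ) ≤
      2 * (3 * Gamma4 / Gamma5) ^ 3 :=
  stmt_6_general n Y hY y
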